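/- arXiv:2410.09296 — 6 statements merged into one kernel-verified Lean document; each statement's English description precedes it below -/
import Mathlib

section
/- For any σ > 0, the function μ ↦ ∑_{x ∈ ℤ} exp(-(x - μ)²/(2σ²)) has strictly negative derivative at every μ ∈ (0, 1/2). -/
/-!
Write `θ(μ) = ∑ₓ exp (-(x - μ)² / (2σ²))`. Jacobi's transformation formula identifies `θ(μ)`
with `√(2πσ²) · jacobiTheta₂ μ (2πσ²i)`, and its derivative formula gives `θ'(μ)` in two forms:
in real space, `σ⁻² ∑ₓ (x - μ) exp (-(x - μ)² / (2σ²))`, and on the Fourier side,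
`-4π √(2πσ²) ∑_{n ≥ 1} n q^{n²} sin (2πnμ)` with `q = exp (-2π²σ²)`.

For `σ ≤ 1/5` the real-space sum is dominated by its term at `x = 0`: pairing `x = n + 1` with
`x = -(n + 1)` using the oddness of `u exp (-u²/2)`, the pairs are controlled by the monotonicity
of `u exp (-u²/2)` on `[1, ∞)` when `μ ≥ σ`, and by a mean value estimate when `μ < σ`.
For `σ ≥ 1/5` we have `q < 1/2`, and since `|sin nθ| ≤ n sin θ` the Fourier series is dominated
by its first term.
-/

open Real Set
open scoped Complex
open Complex (I)

lemma ofReal_cpow_one_half {x : ℝ} (hx : 0 ≤ x) : (x : ℂ) ^ (1 / 2 : ℂ) = (√x : ℝ) := by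
  rw [Real.sqrt_eq_rpow, Complex.ofReal_cpow hx]
  norm_num

lemma im_neg_one_div_pos {τ : ℂ} (hτ : 0 < τ.im) : 0 < (-1 / τ).im := by
  rw [neg_div, Complex.neg_im, one_div, Complex.inv_im, neg_div, neg_neg]
  exact div_pos hτ (Complex.normSq_pos.mpr fun h => by simp [h] at hτ)

lemma im_two_mul_pi_mul_sq_mul_I_pos {σ : ℝ} (hσ : σ ≠ 0) : 0 < (2 * π * σ ^ 2 * I : ℂ).im := by
  rw [show (2 * π * σ ^ 2 * I : ℂ) = ((2 * π * σ ^ 2 : ℝ) : ℂ) * I by push_cast; rfl,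
    Complex.mul_I_im, Complex.ofReal_re]
  positivity

-- The terms on the right of `jacobiTheta₂_functional_equation` at `τ = 2πσ²i` are Gaussians.
lemma cexp_mul_jacobiTheta₂_term_dual (σ m : ℝ) (n : ℤ) :
    cexp (-π * I * m ^ 2 / (2 * π * σ ^ 2 * I)) *
        jacobiTheta₂_term n (m / (2 * π * σ ^ 2 * I)) (-1 / (2 * π * σ ^ 2 * I)) =
      (rexp (-(n - m) ^ 2 / (2 * σ ^ 2)) : ℂ) := by
  rw [jacobiTheta₂_term, ← Complex.exp_add, Complex.ofReal_exp]
  congr 1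
  have : (π : ℂ) ≠ 0 := by exact_mod_cast pi_ne_zero
  push_cast
  field_simp
  ring_nf

lemma sqrt_mul_one_div_cpow_one_half {σ : ℝ} (hσ : σ ≠ 0) :
    (√(2 * π * σ ^ 2) : ℂ) * (1 / (-I * (2 * π * σ ^ 2 * I)) ^ (1 / 2 : ℂ)) = 1 := by
  have h : -I * (2 * π * σ ^ 2 * I) = ((2 * π * σ ^ 2 : ℝ) : ℂ) := by
    push_cast
    ring_nf
    simp only [Complex.I_sq]
    ring
  rw [h, ofReal_cpow_one_half (by positivity)]
  have : (√(2 * π * σ ^ 2) : ℂ) ≠ 0 := by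
    exact_mod_cast (Real.sqrt_pos.mpr (by positivity)).ne'
  field_simp

lemma hasSum_gaussian_jacobiTheta₂ {σ : ℝ} (hσ : σ ≠ 0) (m : ℝ) :
    HasSum (fun n : ℤ => (rexp (-(n - m) ^ 2 / (2 * σ ^ 2)) : ℂ))
      (√(2 * π * σ ^ 2) * jacobiTheta₂ m (2 * π * σ ^ 2 * I)) := by
  have hτ := im_neg_one_div_pos (im_two_mul_pi_mul_sq_mul_I_pos hσ)
  have h := (hasSum_jacobiTheta₂_term (m / (2 * π * σ ^ 2 * I)) hτ).mul_left
    (cexp (-π * I * m ^ 2 / (2 * π * σ ^ 2 * I)))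
  simp only [cexp_mul_jacobiTheta₂_term_dual] at h
  rwa [jacobiTheta₂_functional_equation, ← mul_assoc, ← mul_assoc,
    sqrt_mul_one_div_cpow_one_half hσ, one_mul]

lemma hasSum_gaussian_deriv_jacobiTheta₂' {σ : ℝ} (hσ : σ ≠ 0) (m : ℝ) :
    HasSum (fun n : ℤ => (((n - m) / σ ^ 2 * rexp (-(n - m) ^ 2 / (2 * σ ^ 2)) : ℝ) : ℂ))
      (√(2 * π * σ ^ 2) * jacobiTheta₂' m (2 * π * σ ^ 2 * I)) := by
  set τ : ℂ := 2 * π * σ ^ 2 * I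
  have hτ : 0 < (-1 / τ).im := im_neg_one_div_pos (im_two_mul_pi_mul_sq_mul_I_pos hσ)
  have h := ((hasSum_jacobiTheta₂'_term (m / τ) hτ).sub
    ((hasSum_jacobiTheta₂_term (m / τ) hτ).mul_left (2 * π * I * m))).mul_left
    (cexp (-π * I * m ^ 2 / τ) / τ)
  have hterm : ∀ n : ℤ, cexp (-π * I * m ^ 2 / τ) / τ *
      (jacobiTheta₂'_term n (m / τ) (-1 / τ) - 2 * π * I * m * jacobiTheta₂_term n (m / τ) (-1 / τ))
      = (((n - m) / σ ^ 2 * rexp (-(n - m) ^ 2 / (2 * σ ^ 2)) : ℝ) : ℂ) := by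
    intro n
    rw [Complex.ofReal_mul, ← cexp_mul_jacobiTheta₂_term_dual, jacobiTheta₂'_term]
    have : (π : ℂ) ≠ 0 := by exact_mod_cast pi_ne_zero
    simp only [τ]
    push_cast
    field_simp
  simp only [hterm] at h
  rwa [jacobiTheta₂'_functional_equation, mul_div_assoc, ← mul_assoc, ← mul_assoc,
    sqrt_mul_one_div_cpow_one_half hσ, one_mul]

lemma hasDerivAt_tsum_gaussian {σ : ℝ} (hσ : σ ≠ 0) (μ : ℝ) :
    HasDerivAt (fun m : ℝ => ∑' x : ℤ, rexp (-((x : ℝ) - m) ^ 2 / (2 * σ ^ 2)))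
      ((√(2 * π * σ ^ 2) * jacobiTheta₂' μ (2 * π * σ ^ 2 * I)).re) μ := by
  have hθ : (fun m : ℝ => ∑' x : ℤ, rexp (-((x : ℝ) - m) ^ 2 / (2 * σ ^ 2))) =
      fun m : ℝ => ((√(2 * π * σ ^ 2) : ℂ) * jacobiTheta₂ m (2 * π * σ ^ 2 * I)).re :=
    funext fun m => (Complex.hasSum_re (hasSum_gaussian_jacobiTheta₂ hσ m)).tsum_eq
  rw [hθ]
  exact ((hasDerivAt_jacobiTheta₂_fst (μ : ℂ) (im_two_mul_pi_mul_sq_mul_I_pos hσ)).const_mul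
    _).real_of_complex

noncomputable def mulExpNegSqHalf (u : ℝ) : ℝ := u * rexp (-u ^ 2 / 2)

lemma mulExpNegSqHalf_neg (u : ℝ) : mulExpNegSqHalf (-u) = -mulExpNegSqHalf u := by
  simp [mulExpNegSqHalf]

lemma mulExpNegSqHalf_nonneg {u : ℝ} (hu : 0 ≤ u) : 0 ≤ mulExpNegSqHalf u := by
  unfold mulExpNegSqHalf; positivity

lemma hasDerivAt_mulExpNegSqHalf (u : ℝ) :
    HasDerivAt mulExpNegSqHalf ((1 - u ^ 2) * rexp (-u ^ 2 / 2)) u := by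
  have h : HasDerivAt (fun v : ℝ => -v ^ 2 / 2) (-u) u :=
    (((hasDerivAt_pow 2 u).fun_neg).div_const 2).congr_deriv
      (by simp only [Nat.cast_ofNat, Nat.add_one_sub_one, pow_one]; ring)
  exact ((hasDerivAt_id' u).mul h.exp).congr_deriv (by ring)

lemma strictAntiOn_mulExpNegSqHalf : StrictAntiOn mulExpNegSqHalf (Ici 1) := by
  refine strictAntiOn_of_deriv_neg (convex_Ici 1)
    (fun u _ => (hasDerivAt_mulExpNegSqHalf u).continuousAt.continuousWithinAt) fun u hu => ?_
  rw [interior_Ici, mem_Ioi] at hu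
  rw [(hasDerivAt_mulExpNegSqHalf u).deriv]
  exact mul_neg_of_neg_of_pos (by nlinarith) (exp_pos _)

lemma half_lt_mulExpNegSqHalf {a : ℝ} (ha0 : 0 < a) (ha1 : a < 1) : a / 2 < mulExpNegSqHalf a := by
  have : 1 - a ^ 2 / 2 ≤ rexp (-a ^ 2 / 2) := by
    have := add_one_le_exp (-a ^ 2 / 2); linarith
  unfold mulExpNegSqHalf
  nlinarith

lemma neg_four_mul_exp_neg_le_deriv_mulExpNegSqHalf {u : ℝ} (hu : 4 ≤ u) :
    -(4 * rexp (-u)) ≤ (1 - u ^ 2) * rexp (-u ^ 2 / 2) := by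
  have h1 : u ^ 2 / 4 ≤ rexp (u ^ 2 / 4) := by have := add_one_le_exp (u ^ 2 / 4); linarith
  have h2 : rexp (-(u ^ 2 / 4)) ≤ rexp (-u) := exp_le_exp.mpr (by nlinarith)
  have h3 : rexp (-u ^ 2 / 2) = rexp (-(u ^ 2 / 4)) * rexp (-(u ^ 2 / 4)) := by
    rw [← exp_add]; ring_nf
  have h4 : u ^ 2 * rexp (-(u ^ 2 / 4)) ≤ 4 := by
    rw [exp_neg, ← div_eq_mul_inv, div_le_iff₀ (exp_pos _)]; linarith
  calc -(4 * rexp (-u)) ≤ -(u ^ 2 * rexp (-(u ^ 2 / 4)) * rexp (-(u ^ 2 / 4))) := by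
        gcongr
    _ ≤ (1 - u ^ 2) * rexp (-u ^ 2 / 2) := by
        rw [h3]; nlinarith [exp_pos (-(u ^ 2 / 4))]

lemma mulExpNegSqHalf_sub_le {x y : ℝ} (hx : 4 ≤ x) (hxy : x ≤ y) :
    mulExpNegSqHalf x - mulExpNegSqHalf y ≤ 4 * rexp (-x) * (y - x) := by
  have hderiv : ∀ u ∈ interior (Ici x), -(4 * rexp (-x)) ≤ deriv mulExpNegSqHalf u := by
    intro u hu
    rw [interior_Ici, mem_Ioi] at hu
    rw [(hasDerivAt_mulExpNegSqHalf u).deriv]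
    calc -(4 * rexp (-x)) ≤ -(4 * rexp (-u)) := by gcongr
      _ ≤ _ := neg_four_mul_exp_neg_le_deriv_mulExpNegSqHalf (by linarith)
  have := (convex_Ici x).mul_sub_le_image_sub_of_le_deriv
    (fun u _ => (hasDerivAt_mulExpNegSqHalf u).continuousAt.continuousWithinAt)
    (fun u _ => (hasDerivAt_mulExpNegSqHalf u).differentiableAt.differentiableWithinAt)
    hderiv x self_mem_Ici y hxy hxy
  linarith

lemma thirty_two_mul_exp_neg_le (n : ℕ) : 32 * rexp (-(5 * n + 4)) ≤ (1 / 2) ^ n := by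
  have h4 : 32 ≤ rexp 4 := by
    have := pow_le_pow_left₀ (by norm_num) exp_one_gt_d9.le 4
    rw [exp_one_pow] at this
    norm_num at this ⊢
    linarith
  have h5 : 2 ≤ rexp 5 := by linarith [add_one_le_exp 5]
  have h : 32 * 2 ^ n ≤ rexp (5 * n + 4) := by
    rw [exp_add, show (5 : ℝ) * n = n * 5 by ring, exp_nat_mul, mul_comm (32 : ℝ)]
    exact mul_le_mul (pow_le_pow_left₀ (by norm_num) h5 n) h4 (by norm_num) (by positivity)
  rw [exp_neg, one_div_pow, ← div_eq_mul_inv, div_le_div_iff₀ (exp_pos _) (by positivity)]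
  linarith

lemma HasSum.nat_sub_of_odd {F : ℝ → ℝ} (hF : ∀ v, F (-v) = -F v) {c S : ℝ}
    (h : HasSum (fun n : ℤ => F (n - c)) S) :
    HasSum (fun n : ℕ => F (n + 1 - c) - F (n + 1 + c)) (S + F c) := by
  have h1 := h.nat_add_neg
  have h2 : ∀ n : ℕ, F ((n : ℤ) - c) + F (((-n : ℤ) : ℝ) - c) = F (n - c) - F (n + c) := by
    intro n
    push_cast
    rw [show -(n : ℝ) - c = -(n + c) by ring, hF]
    ring
  simp only [h2] at h1
  have h3 := (hasSum_nat_add_iff' 1).mpr h1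
  simp only [Finset.sum_range_one, Nat.cast_add, Nat.cast_one, Nat.cast_zero, Int.cast_zero,
    zero_sub, hF] at h3
  rwa [_root_.zero_add, show S + -F c - (-F c - F c) = S + F c by ring] at h3

lemma le_of_hasSum_sub_of_antitoneOn {g : ℝ → ℝ} {x₀ c T : ℝ} (hg : AntitoneOn g (Ici x₀))
    (hg0 : ∀ x ∈ Ici x₀, 0 ≤ g x) (hc0 : 0 ≤ c) (hc : c ≤ 1 / 2) (hx₀ : x₀ ≤ 1 - c)
    (h : HasSum (fun n : ℕ => g (n + 1 - c) - g (n + 1 + c)) T) : T ≤ g (1 - c) := by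
  rw [← h.tsum_eq]
  refine h.summable.tsum_le_of_sum_range_le fun N => ?_
  calc ∑ n ∈ Finset.range N, (g (n + 1 - c) - g (n + 1 + c))
      ≤ ∑ n ∈ Finset.range N, (g (n + 1 - c) - g ((n + 1 : ℕ) + 1 - c)) := by
        refine Finset.sum_le_sum fun n _ => ?_
        have hn : (0 : ℝ) ≤ n := n.cast_nonneg
        have := hg (a := n + 1 + c) (b := (n + 1 : ℕ) + 1 - c) (by simp only [mem_Ici]; linarith)
          (by simp only [mem_Ici]; push_cast; linarith) (by push_cast; linarith)
        linarith
    _ = g (1 - c) - g (N + 1 - c) := by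
        rw [Finset.sum_range_sub' (fun n : ℕ => g (n + 1 - c))]
        simp
    _ ≤ g (1 - c) := by
        have := hg0 (N + 1 - c) (by simp only [mem_Ici]; linarith [N.cast_nonneg (α := ℝ)])
        linarith

lemma le_of_hasSum_mulExpNegSqHalf_sub {σ μ T : ℝ} (hσ : σ ≤ 1 / 5) (hμ0 : 0 < μ) (hμσ : μ < σ)
    (h : HasSum (fun n : ℕ => mulExpNegSqHalf ((n + 1 - μ) / σ) -
      mulExpNegSqHalf ((n + 1 + μ) / σ)) T) : T ≤ μ / σ / 2 := by
  have hσ0 : 0 < σ := hμ0.trans hμσ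
  have hbound : ∀ n : ℕ, mulExpNegSqHalf ((n + 1 - μ) / σ) - mulExpNegSqHalf ((n + 1 + μ) / σ) ≤
      μ / σ / 4 * (1 / 2) ^ n := by
    intro n
    have hn : (0 : ℝ) ≤ n := n.cast_nonneg
    have hx : 5 * n + 4 ≤ (n + 1 - μ) / σ := by
      rw [le_div_iff₀ hσ0]
      nlinarith [mul_le_mul_of_nonneg_left hσ hn]
    have hlip := mulExpNegSqHalf_sub_le (x := (n + 1 - μ) / σ) (y := (n + 1 + μ) / σ)
      (by linarith) (div_le_div_of_nonneg_right (by linarith) hσ0.le)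
    have hwidth : (n + 1 + μ) / σ - (n + 1 - μ) / σ = 2 * (μ / σ) := by ring
    rw [hwidth] at hlip
    calc _ ≤ 4 * rexp (-((n + 1 - μ) / σ)) * (2 * (μ / σ)) := hlip
      _ ≤ 4 * rexp (-(5 * n + 4)) * (2 * (μ / σ)) := by gcongr 4 * rexp ?_ * _; linarith
      _ = μ / σ / 4 * (32 * rexp (-(5 * n + 4))) := by ring
      _ ≤ μ / σ / 4 * (1 / 2) ^ n := by gcongr; exact thirty_two_mul_exp_neg_le n
  calc T ≤ μ / σ / 4 * 2 := hasSum_le hbound h (hasSum_geometric_two.mul_left (μ / σ / 4))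
    _ = μ / σ / 2 := by ring

lemma strictAntiOn_mulExpNegSqHalf_div {σ : ℝ} (hσ : 0 < σ) :
    StrictAntiOn (fun v => mulExpNegSqHalf (v / σ)) (Ici σ) := fun _ hx _ hy hxy =>
  strictAntiOn_mulExpNegSqHalf ((one_le_div hσ).mpr hx) ((one_le_div hσ).mpr hy)
    (div_lt_div_of_pos_right hxy hσ)

lemma neg_of_hasSum_gaussian_deriv {σ μ S : ℝ} (hσ0 : 0 < σ) (hσ : σ ≤ 1 / 5) (hμ0 : 0 < μ)
    (hμ : μ < 1 / 2)
    (h : HasSum (fun n : ℤ => (n - μ) / σ ^ 2 * rexp (-(n - μ) ^ 2 / (2 * σ ^ 2))) S) :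
    S < 0 := by
  set F : ℝ → ℝ := fun v => mulExpNegSqHalf (v / σ)
  have hF : ∀ v, F (-v) = -F v := fun v => by simp only [F, neg_div, mulExpNegSqHalf_neg]
  have hterm : ∀ n : ℤ, σ * ((n - μ) / σ ^ 2 * rexp (-(n - μ) ^ 2 / (2 * σ ^ 2))) = F (n - μ) := by
    intro n
    simp only [F, mulExpNegSqHalf]
    field_simp
  have hF_sum : HasSum (fun n : ℤ => F (n - μ)) (σ * S) := by
    simpa only [hterm] using h.mul_left σ
  have hpairs := hF_sum.nat_sub_of_odd hF
  suffices σ * S + F μ < F μ by nlinarith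
  rcases lt_or_ge μ σ with hμσ | hσμ
  · calc σ * S + F μ ≤ μ / σ / 2 := le_of_hasSum_mulExpNegSqHalf_sub hσ hμ0 hμσ hpairs
      _ < F μ := half_lt_mulExpNegSqHalf (by positivity) ((div_lt_one hσ0).mpr hμσ)
  · have hanti := strictAntiOn_mulExpNegSqHalf_div hσ0
    calc σ * S + F μ ≤ F (1 - μ) := le_of_hasSum_sub_of_antitoneOn hanti.antitoneOn
          (fun x hx => mulExpNegSqHalf_nonneg (div_nonneg (hσ0.le.trans hx) hσ0.le)) hμ0.le
          hμ.le (by linarith) hpairs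
      _ < F μ := hanti hσμ (by simp only [mem_Ici]; linarith) (by linarith)

lemma re_jacobiTheta₂'_term (σ μ : ℝ) (n : ℤ) :
    (jacobiTheta₂'_term n μ (2 * π * σ ^ 2 * I)).re =
      -(2 * π * n * rexp (-(2 * π ^ 2 * σ ^ 2) * n ^ 2) * Real.sin (2 * π * n * μ)) := by
  have harg : 2 * π * I * n * μ + π * I * n ^ 2 * (2 * π * σ ^ 2 * I) =
      ((-(2 * π ^ 2 * σ ^ 2) * n ^ 2 : ℝ) : ℂ) + ((2 * π * n * μ : ℝ) : ℂ) * I := by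
    push_cast
    ring_nf
    simp only [Complex.I_sq]
    ring
  rw [jacobiTheta₂'_term, jacobiTheta₂_term, harg, Complex.exp_add_mul_I, ← Complex.ofReal_exp,
    ← Complex.ofReal_cos, ← Complex.ofReal_sin]
  simp only [Complex.mul_re, Complex.mul_im, Complex.add_re, Complex.add_im, Complex.ofReal_re,
    Complex.ofReal_im, Complex.I_re, Complex.I_im, Complex.intCast_re, Complex.intCast_im,
    Complex.re_ofNat, Complex.im_ofNat]
  ring

lemma abs_sin_nat_mul_le (n : ℕ) (x : ℝ) : |Real.sin (n * x)| ≤ n * |Real.sin x| := by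
  induction n with
  | zero => simp
  | succ n ih =>
    rw [Nat.cast_succ, add_one_mul, Real.sin_add]
    calc |Real.sin (n * x) * Real.cos x + Real.cos (n * x) * Real.sin x|
        ≤ |Real.sin (n * x)| * |Real.cos x| + |Real.cos (n * x)| * |Real.sin x| := by
          rw [← abs_mul, ← abs_mul]; exact abs_add_le _ _
      _ ≤ |Real.sin (n * x)| * 1 + 1 * |Real.sin x| := by
          gcongr
          · exact Real.abs_cos_le_one x
          · exact Real.abs_cos_le_one _
      _ ≤ (n + 1) * |Real.sin x| := by linarith

lemma sq_add_two_le_four_pow (k : ℕ) : (k + 2) ^ 2 ≤ 4 ^ (k + 1) := by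
  induction k with
  | zero => norm_num
  | succ k ih =>
    calc (k + 1 + 2) ^ 2 ≤ 4 * (k + 2) ^ 2 := by ring_nf; nlinarith
      _ ≤ 4 ^ (k + 1 + 1) := by rw [pow_succ 4 (k + 1)]; linarith

lemma sq_mul_pow_sq_le {q : ℝ} (hq0 : 0 ≤ q) (hq1 : q ≤ 1) (k : ℕ) :
    ((k + 2 : ℕ) : ℝ) ^ 2 * q ^ ((k + 2) ^ 2) ≤ q * (4 * q ^ 3) * (4 * q ^ 3) ^ k :=
  calc ((k + 2 : ℕ) : ℝ) ^ 2 * q ^ ((k + 2) ^ 2) ≤ 4 ^ (k + 1) * q ^ (3 * k + 4) := by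
        refine mul_le_mul (by exact_mod_cast sq_add_two_le_four_pow k)
          (pow_le_pow_of_le_one hq0 hq1 (by nlinarith)) (by positivity) (by positivity)
    _ = q * (4 * q ^ 3) * (4 * q ^ 3) ^ k := by ring

lemma pos_of_hasSum_mul_pow_sq_mul_sin {q θ V : ℝ} (hq0 : 0 < q) (hq : q < 1 / 2)
    (hθ0 : 0 < θ) (hθπ : θ < π)
    (hV : HasSum (fun n : ℕ => n * q ^ (n ^ 2) * Real.sin (n * θ)) V) : 0 < V := by
  set ρ := 4 * q ^ 3
  have hρ0 : 0 ≤ ρ := by positivity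
  have hρ : ρ < 1 / 2 := by
    have : q ^ 3 < (1 / 2) ^ 3 := pow_lt_pow_left₀ hq hq0.le (by norm_num)
    linarith
  have hsin : 0 < Real.sin θ := Real.sin_pos_of_pos_of_lt_pi hθ0 hθπ
  have hbound : ∀ k : ℕ, -(q * Real.sin θ * ρ * ρ ^ k) ≤
      (k + 2 : ℕ) * q ^ ((k + 2) ^ 2) * Real.sin ((k + 2 : ℕ) * θ) := by
    intro k
    have hsin_k := neg_le_of_abs_le ((abs_sin_nat_mul_le (k + 2) θ).trans_eq
      (by rw [abs_of_pos hsin]))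
    have hcoef : 0 ≤ ((k + 2 : ℕ) : ℝ) * q ^ ((k + 2) ^ 2) := by positivity
    nlinarith [mul_le_mul_of_nonneg_left hsin_k hcoef, sq_mul_pow_sq_le hq0.le (by linarith) k]
  have hgeom := (hasSum_geometric_of_lt_one hρ0 (by linarith)).mul_left (q * Real.sin θ * ρ)
  have hle : -(q * Real.sin θ * ρ * (1 - ρ)⁻¹) ≤ V - q * Real.sin θ := by
    simpa [Finset.sum_range_succ] using hasSum_le hbound hgeom.neg ((hasSum_nat_add_iff' 2).mpr hV)
  have hρ' : ρ * (1 - ρ)⁻¹ < 1 := by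
    rw [← div_eq_mul_inv, div_lt_one (by linarith)]
    linarith
  have hqs : 0 < q * Real.sin θ := by positivity
  nlinarith

lemma exp_neg_lt_half {x : ℝ} (hx : log 2 < x) : rexp (-x) < 1 / 2 := by
  calc rexp (-x) < rexp (-log 2) := exp_lt_exp.mpr (by linarith)
    _ = 1 / 2 := by rw [exp_neg, exp_log two_pos, one_div]

lemma re_jacobiTheta₂'_neg {σ μ : ℝ} (hσ : 1 / 5 ≤ σ) (hμ0 : 0 < μ) (hμ2 : μ < 1 / 2) :
    (jacobiTheta₂' μ (2 * π * σ ^ 2 * I)).re < 0 := by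
  have hσ0 : 0 < σ := by linarith
  set q := rexp (-(2 * π ^ 2 * σ ^ 2))
  set f : ℤ → ℝ := fun n =>
    -(2 * π * n * rexp (-(2 * π ^ 2 * σ ^ 2) * n ^ 2) * Real.sin (2 * π * n * μ))
  have hS : HasSum f (jacobiTheta₂' μ (2 * π * σ ^ 2 * I)).re := by
    simpa only [re_jacobiTheta₂'_term] using Complex.hasSum_re
      (hasSum_jacobiTheta₂'_term (μ : ℂ) (im_two_mul_pi_mul_sq_mul_I_pos hσ0.ne'))
  have heven : ∀ n : ℤ, f (-n) = f n := fun n => by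
    simp only [f, Int.cast_neg, mul_neg, neg_mul, Real.sin_neg, neg_sq]
    ring
  have hnat : ∀ n : ℕ, f n + f n = -(4 * π) * (n * q ^ (n ^ 2) * Real.sin (n * (2 * π * μ))) := by
    intro n
    simp only [f, q, ← Real.exp_nat_mul, Int.cast_natCast, Nat.cast_pow]
    ring_nf
  have hV := hS.nat_add_neg.div_const (-(4 * π))
  have h4π : 0 < 4 * π := by positivity
  simp only [heven, hnat, mul_div_cancel_left₀ _ (neg_ne_zero.mpr h4π.ne'), f, Int.cast_zero,
    mul_zero, zero_mul, Real.sin_zero, neg_zero, add_zero] at hV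
  have hq : q < 1 / 2 := by
    refine exp_neg_lt_half ?_
    have hσ2 : 1 / 25 ≤ σ ^ 2 := by nlinarith
    have hπ2 : 9 ≤ π ^ 2 := by nlinarith [pi_gt_three]
    nlinarith [log_two_lt_d9, mul_le_mul hπ2 hσ2 (by norm_num) (sq_nonneg π)]
  have hpos := pos_of_hasSum_mul_pow_sq_mul_sin (exp_pos _) hq (by positivity)
    (by nlinarith [pi_pos]) hV
  simpa [div_mul_cancel₀ _ (neg_ne_zero.mpr h4π.ne')] using
    mul_neg_of_pos_of_neg hpos (neg_neg_of_pos h4π)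

theorem theta_sum_deriv_neg (σ : ℝ) (hσ : 0 < σ) (μ : ℝ)
    (hμ : μ ∈ Set.Ioo (0 : ℝ) (1/2)) :
    deriv (fun m : ℝ => ∑' x : ℤ, Real.exp (-((x : ℝ) - m)^2 / (2 * σ^2))) μ < 0 := by
  obtain ⟨hμ0, hμ2⟩ := hμ
  rw [(hasDerivAt_tsum_gaussian hσ.ne' μ).deriv]
  rcases le_total σ (1 / 5) with hσ5 | hσ5
  · have h := Complex.hasSum_re (hasSum_gaussian_deriv_jacobiTheta₂' hσ.ne' μ)
    simp only [Complex.ofReal_re] at h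
    exact neg_of_hasSum_gaussian_deriv hσ hσ5 hμ0 hμ2 h
  · rw [Complex.re_ofReal_mul]
    exact mul_neg_of_pos_of_neg (Real.sqrt_pos.mpr (by positivity))
      (re_jacobiTheta₂'_neg hσ5 hμ0 hμ2)
end

section
/- Let X be a random variable on ℤ with probability mass function proportional to exp(-(x - μ)²/(2σ²)) (a discrete Gaussian centered at μ with scale σ). Then E[X] = μ if and only if 2μ is an integer. -/
/-!
Write `t = 2σ²` and `B(μ) = ∑ₙ (n - μ) e^{-(n-μ)²/t}`, so that the mean minus `μ` is `B(μ)`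
divided by the normalising constant. `B` is `1`-periodic and odd, hence vanishes on `½ℤ`, and it
suffices to show `B < 0` on `(0, ½)`. For `t > 1/10`, the functional equation of the Jacobi theta
function turns `B(μ)` into `-2πt√(πt) ∑ₖ k e^{-π²tk²} sin(2πkμ)`, whose first term dominates.
For `t ≤ 1/10` write `g(u) = u e^{-u²/t}`. If `μ ≥ √(t/2)`, pairing `n + 1 - μ` with `n + μ` gives
negative terms because `g` decreases beyond `√(t/2)`; otherwise `-g(μ) ≤ -μ/2` outweighs the
remaining pairs `g(n + 1 - μ) - g(n + 1 + μ)`, which the mean value theorem bounds by a rapidly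
decaying multiple of `μ`.
-/

open Real
open Complex (I)

lemma abs_sin_nat_mul_le_s2 (n : ℕ) (θ : ℝ) : |sin (n * θ)| ≤ n * |sin θ| := by
  induction n with
  | zero => simp
  | succ n ih =>
    rw [Nat.cast_succ, add_mul, one_mul, sin_add]
    calc |sin (n * θ) * cos θ + cos (n * θ) * sin θ|
        ≤ |sin (n * θ)| * |cos θ| + |cos (n * θ)| * |sin θ| := by
          rw [← abs_mul, ← abs_mul]; exact abs_add_le _ _
      _ ≤ |sin (n * θ)| * 1 + 1 * |sin θ| := by
          gcongr
          exacts [abs_cos_le_one θ, abs_cos_le_one _]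
      _ ≤ (n + 1) * |sin θ| := by linarith

lemma add_two_sq_le_four_mul_three_pow (n : ℕ) : ((n : ℝ) + 2) ^ 2 ≤ 4 * 3 ^ n := by
  induction n with
  | zero => norm_num
  | succ n ih =>
    push_cast
    rw [pow_succ 3 n]
    nlinarith [n.cast_nonneg (α := ℝ)]

lemma twenty_lt_exp_three : (20 : ℝ) < exp 3 := by
  calc (20 : ℝ) < 2.7182818283 ^ 3 := by norm_num
    _ < exp 1 ^ 3 := by gcongr; exact exp_one_gt_d9
    _ = exp 3 := by rw [← exp_nat_mul]; norm_num

lemma neg_le_sineSeries_term {q : ℝ} (hq₀ : 0 ≤ q) (hq₁ : q ≤ 1) (θ : ℝ) (n : ℕ) :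
    -(4 * q ^ 4 * |sin θ| * (3 * q ^ 5) ^ n) ≤
      ((n + 2 : ℕ) : ℝ) * q ^ ((n + 2) ^ 2) * sin ((n + 2 : ℕ) * θ) := by
  have hcoeff : ((n + 2 : ℕ) : ℝ) ^ 2 * q ^ ((n + 2) ^ 2) ≤ 4 * q ^ 4 * (3 * q ^ 5) ^ n :=
    calc ((n + 2 : ℕ) : ℝ) ^ 2 * q ^ ((n + 2) ^ 2) ≤ (4 * 3 ^ n) * q ^ (4 + 5 * n) := by
          push_cast
          exact mul_le_mul (add_two_sq_le_four_mul_three_pow n)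
            (pow_le_pow_of_le_one hq₀ hq₁ (by nlinarith [Nat.le_mul_self n]))
            (by positivity) (by positivity)
      _ = 4 * q ^ 4 * (3 * q ^ 5) ^ n := by ring
  have := mul_le_mul_of_nonneg_left (abs_le.1 (abs_sin_nat_mul_le_s2 (n + 2) θ)).1
    (by positivity : (0 : ℝ) ≤ ((n + 2 : ℕ) : ℝ) * q ^ ((n + 2) ^ 2))
  nlinarith [abs_nonneg (sin θ)]

/-- For `e^{-a} ≤ ½` the first term `e^{-a} sin θ` dominates the series. -/
theorem sineSeries_pos {a θ S : ℝ} (ha : log 2 ≤ a) (hθ₀ : 0 < θ) (hθπ : θ < π)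
    (hS : HasSum (fun k : ℕ => k * exp (-a * k ^ 2) * sin (k * θ)) S) : 0 < S := by
  set q := exp (-a) with hq
  have hq₀ : 0 < q := exp_pos _
  have hq₁ : q ≤ 1 / 2 := by
    rw [hq, ← exp_log (by norm_num : (0 : ℝ) < 1 / 2), one_div, log_inv]
    exact exp_le_exp.2 (neg_le_neg ha)
  have hq₃ : q ^ 3 ≤ 1 / 8 := (pow_le_pow_left₀ hq₀.le hq₁ 3).trans_eq (by norm_num)
  have hq₅ : q ^ 5 ≤ 1 / 32 := (pow_le_pow_left₀ hq₀.le hq₁ 5).trans_eq (by norm_num)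
  have hsin : 0 < sin θ := sin_pos_of_pos_of_lt_pi hθ₀ hθπ
  have hexp (k : ℕ) : exp (-a * k ^ 2) = q ^ (k ^ 2) := by
    rw [hq, ← exp_nat_mul]; push_cast; ring_nf
  have htail := (hasSum_nat_add_iff' 2).2 hS
  simp only [Finset.sum_range_succ, Finset.sum_range_zero, hexp] at htail
  have hgeom := ((hasSum_geometric_of_lt_one (r := 3 * q ^ 5) (by positivity)
    (by linarith)).mul_left (4 * q ^ 4 * |sin θ|)).neg
  have hS' := hasSum_le (neg_le_sineSeries_term hq₀.le (by linarith) θ) hgeom htail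
  simp only [Nat.cast_zero, Nat.cast_one, zero_mul, one_mul, zero_add, one_pow, pow_one,
    abs_of_pos hsin] at hS'
  have hratio : 4 * q ^ 4 * (1 - 3 * q ^ 5)⁻¹ < q := by
    rw [← div_eq_mul_inv, div_lt_iff₀ (by linarith)]
    nlinarith
  nlinarith

lemma jacobiTheta₂'_add_mul_jacobiTheta₂ (z τ : ℂ) :
    jacobiTheta₂' z τ + 2 * π * I * (z / τ) * jacobiTheta₂ z τ =
      1 / (-I * τ) ^ (1 / 2 : ℂ) * Complex.exp (-π * I * z ^ 2 / τ) / τ *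
        jacobiTheta₂' (z / τ) (-1 / τ) := by
  rw [jacobiTheta₂_functional_equation z τ, jacobiTheta₂'_functional_equation z τ]
  ring

lemma hasSum_nat_jacobiTheta₂'_ofReal (x : ℝ) {y : ℝ} (hy : 0 < y) :
    HasSum (fun k : ℕ => ((-4 * π * k * exp (-π * y * k ^ 2) * sin (2 * π * k * x) : ℝ) : ℂ))
      (jacobiTheta₂' x (y * I)) := by
  have h := (hasSum_jacobiTheta₂'_term (x : ℂ) (τ := y * I) (by simpa using hy)).nat_add_neg
  rw [jacobiTheta₂'_term, Int.cast_zero, mul_zero, zero_mul, add_zero] at h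
  refine h.congr_fun fun k => ?_
  have hexp (m : ℂ) : 2 * π * I * m * x + π * I * m ^ 2 * (y * I) =
      -π * y * m ^ 2 + (2 * π * m * x) * I := by
    ring_nf
    rw [Complex.I_sq]
    ring
  simp only [jacobiTheta₂'_term, jacobiTheta₂_term]
  push_cast
  rw [hexp, hexp, Complex.exp_add, Complex.exp_add, Complex.sin]
  ring_nf

namespace DiscreteGaussian

noncomputable def biasTerm (t u : ℝ) : ℝ := u * exp (-u ^ 2 / t)

/-- `bias t μ` is `Z · (𝔼[X] - μ)` for the discrete Gaussian with `t = 2σ²` and normaliser `Z`. -/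
noncomputable def bias (t μ : ℝ) : ℝ := ∑' n : ℤ, biasTerm t (n - μ)

lemma biasTerm_neg (t u : ℝ) : biasTerm t (-u) = -biasTerm t u := by
  simp [biasTerm]

lemma hasDerivAt_biasTerm (t u : ℝ) :
    HasDerivAt (biasTerm t) ((1 - 2 * u ^ 2 / t) * exp (-u ^ 2 / t)) u := by
  have h : HasDerivAt (fun u => -u ^ 2 / t) (-(2 * u) / t) u := by
    simpa using (hasDerivAt_pow 2 u).neg.div_const t
  exact ((hasDerivAt_id' u).mul h.exp).congr_deriv (by ring)

lemma biasTerm_strictAntiOn {t : ℝ} (ht : 0 < t) :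
    StrictAntiOn (biasTerm t) (Set.Ici √(t / 2)) := by
  refine strictAntiOn_of_hasDerivWithinAt_neg (convex_Ici _)
    (fun u _ => (hasDerivAt_biasTerm t u).continuousAt.continuousWithinAt)
    (fun u _ => (hasDerivAt_biasTerm t u).hasDerivWithinAt) fun u hu => ?_
  rw [interior_Ici, Set.mem_Ioi] at hu
  have hu2 : t / 2 < u ^ 2 := by
    nlinarith [sq_sqrt (by positivity : 0 ≤ t / 2), sqrt_nonneg (t / 2)]
  have : 1 - 2 * u ^ 2 / t < 0 := by
    rw [sub_neg, lt_div_iff₀ ht]; linarith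
  exact mul_neg_of_neg_of_pos this (exp_pos _)

lemma abs_biasTerm_sub_le {t a b : ℝ} (ht : 0 < t) (ha : 0 ≤ a) (hta : t ≤ 4 * a ^ 2)
    (hab : a ≤ b) : |biasTerm t b - biasTerm t a| ≤ 4 * exp (-a ^ 2 / (2 * t)) * (b - a) := by
  refine norm_image_sub_le_of_norm_deriv_le_segment'
    (fun u _ => (hasDerivAt_biasTerm t u).hasDerivWithinAt) (fun u hu => ?_) b ⟨hab, le_rfl⟩
  set y := u ^ 2 / t
  have hy : a ^ 2 / t ≤ y := by
    unfold y
    gcongr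
    exact hu.1
  have hy₁ : 1 / 4 ≤ y := le_trans (by rw [le_div_iff₀ ht]; linarith) hy
  have hyexp : y * exp (-y) ≤ 2 * exp (-y / 2) := by
    have := add_one_le_exp (y / 2)
    have h2 : exp (-y) = exp (-y / 2) * exp (-y / 2) := by rw [← exp_add]; ring_nf
    have h3 : exp (y / 2) * exp (-y / 2) = 1 := by
      rw [← exp_add, neg_div, add_neg_cancel, exp_zero]
    nlinarith [exp_pos (-y / 2)]
  have hexp : exp (-y / 2) ≤ exp (-a ^ 2 / (2 * t)) :=
    exp_le_exp.2 (by rw [show -a ^ 2 / (2 * t) = -(a ^ 2 / t) / 2 by ring]; linarith)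
  rw [show 2 * u ^ 2 / t = 2 * y by ring, neg_div, Real.norm_eq_abs, abs_mul, abs_exp]
  calc |1 - 2 * y| * exp (-y) ≤ 2 * y * exp (-y) := by
        gcongr
        exact abs_le.2 ⟨by linarith, by linarith⟩
    _ ≤ 4 * exp (-a ^ 2 / (2 * t)) := by linarith

lemma im_I_div_pos {t : ℝ} (ht : 0 < t) : 0 < (I / (π * t)).im := by
  rw [← Complex.ofReal_mul, Complex.div_ofReal_im, Complex.I_im]
  positivity

lemma jacobiTheta₂_term_eq_gaussian (t μ : ℝ) (n : ℤ) :
    jacobiTheta₂_term n (-μ * (I / (π * t))) (I / (π * t)) =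
      Complex.exp (μ ^ 2 / t) * (exp (-(n - μ) ^ 2 / t) : ℝ) := by
  rw [jacobiTheta₂_term, Complex.ofReal_exp, ← Complex.exp_add]
  congr 1
  push_cast
  field_simp
  ring_nf
  rw [Complex.I_sq]
  ring

lemma summable_gaussian {t : ℝ} (ht : 0 < t) (μ : ℝ) :
    Summable fun n : ℤ => exp (-(n - μ) ^ 2 / t) := by
  have h := ((summable_jacobiTheta₂_term_iff (-μ * (I / (π * t))) _).2
    (im_I_div_pos ht)).mul_left (Complex.exp (-(μ ^ 2 / t)))
  refine Complex.summable_ofReal.1 (h.congr fun n => ?_)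
  rw [jacobiTheta₂_term_eq_gaussian, Complex.exp_neg]
  field_simp

lemma neg_one_div_I_div (t : ℝ) : -1 / (I / (π * t)) = π * t * I := by
  rw [div_div_eq_mul_div, neg_one_mul, neg_div, Complex.div_I]
  ring

lemma one_div_cpow_neg_I_mul_I_div {t : ℝ} (ht : 0 < t) :
    1 / (-I * (I / (π * t))) ^ (1 / 2 : ℂ) = √(π * t) := by
  have : -I * (I / (π * t)) = ((π * t)⁻¹ : ℝ) := by
    push_cast
    field_simp
    rw [Complex.I_sq]
    ring
  rw [this, show (1 / 2 : ℂ) = ((1 / 2 : ℝ) : ℂ) by norm_num,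
    ← Complex.ofReal_cpow (by positivity), Real.inv_rpow (by positivity), ← Real.sqrt_eq_rpow]
  push_cast
  rw [one_div, inv_inv]

lemma hasSum_biasTerm_jacobiTheta₂' {t : ℝ} (ht : 0 < t) (μ : ℝ) :
    HasSum (fun n : ℤ => (biasTerm t (n - μ) : ℂ))
      (-(t / 2) * √(π * t) * jacobiTheta₂' (-μ) (π * t * I)) := by
  set τ : ℂ := I / (π * t) with hτ_def
  have hτ : 0 < τ.im := im_I_div_pos ht
  have hzτ : -μ * τ / τ = -μ := mul_div_cancel_right₀ _ fun h => by simp [h] at hτ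
  have hτ_inv : -1 / τ = π * t * I := neg_one_div_I_div t
  have hsqrt : 1 / (-I * τ) ^ (1 / 2 : ℂ) = √(π * t) := one_div_cpow_neg_I_mul_I_div ht
  have hexp : -π * I * (-μ * τ) ^ 2 / τ = μ ^ 2 / t := by
    rw [hτ_def]
    field_simp
    ring_nf
    rw [Complex.I_sq]
    ring
  -- `(n - μ) e_n = (2πi)⁻¹ θ'_n - μ θ_n` up to the factor `e^{-μ²/t}`
  have hθ := ((hasSum_jacobiTheta₂'_term (-μ * τ) hτ).add
    ((hasSum_jacobiTheta₂_term (-μ * τ) hτ).mul_left (2 * π * I * (-μ * τ / τ)))).mul_left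
    (Complex.exp (-(μ ^ 2 / t)) / (2 * π * I))
  rw [jacobiTheta₂'_add_mul_jacobiTheta₂, hzτ, hτ_inv, hsqrt, hexp] at hθ
  have hval : -(t / 2) * √(π * t) * jacobiTheta₂' (-μ) (π * t * I) =
      Complex.exp (-(μ ^ 2 / t)) / (2 * π * I) *
        (√(π * t) * Complex.exp (μ ^ 2 / t) / τ * jacobiTheta₂' (-μ) (π * t * I)) := by
    rw [Complex.exp_neg, hτ_def]
    field_simp
    rw [Complex.I_sq]
    ring
  rw [hval]
  refine hθ.congr_fun fun n => ?_
  rw [jacobiTheta₂'_term, jacobiTheta₂_term_eq_gaussian, biasTerm, Complex.exp_neg]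
  field_simp
  push_cast
  ring

lemma summable_biasTerm {t : ℝ} (ht : 0 < t) (μ : ℝ) :
    Summable fun n : ℤ => biasTerm t (n - μ) :=
  Complex.summable_ofReal.1 (hasSum_biasTerm_jacobiTheta₂' ht μ).summable

lemma hasSum_biasTerm {t : ℝ} (ht : 0 < t) (μ : ℝ) :
    HasSum (fun n : ℤ => biasTerm t (n - μ)) (bias t μ) :=
  (summable_biasTerm ht μ).hasSum

theorem hasSum_bias_sineSeries {t : ℝ} (ht : 0 < t) (μ : ℝ) :
    HasSum (fun k : ℕ => -(2 * π * t * √(π * t)) *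
      (k * exp (-(π ^ 2 * t) * k ^ 2) * sin (k * (2 * π * μ)))) (bias t μ) := by
  have hθ := (hasSum_nat_jacobiTheta₂'_ofReal (-μ) (y := π * t) (by positivity)).mul_left
    (-(t / 2) * √(π * t) : ℂ)
  push_cast at hθ
  rw [← Complex.hasSum_ofReal,
    (Complex.hasSum_ofReal.2 (hasSum_biasTerm ht μ)).unique (hasSum_biasTerm_jacobiTheta₂' ht μ)]
  refine hθ.congr_fun fun k => ?_
  rw [mul_neg, Complex.sin_neg]
  push_cast
  ring_nf

lemma hasSum_biasTerm_succ_sub_biasTerm {t : ℝ} (ht : 0 < t) (μ : ℝ) :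
    HasSum (fun n : ℕ => biasTerm t (n + 1 - μ) - biasTerm t (n + μ)) (bias t μ) := by
  have h := ((Equiv.addRight (1 : ℤ)).hasSum_iff.2 (hasSum_biasTerm ht μ)).nat_add_neg_add_one
  refine h.congr_fun fun n => ?_
  rw [sub_eq_add_neg, ← biasTerm_neg]
  simp only [Function.comp_apply, Equiv.coe_addRight]
  push_cast
  ring_nf

lemma hasSum_biasTerm_sub_biasTerm_add {t : ℝ} (ht : 0 < t) (μ : ℝ) :
    HasSum (fun n : ℕ => biasTerm t (n + 1 - μ) - biasTerm t (n + 1 + μ))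
      (bias t μ + biasTerm t μ) := by
  have h := (hasSum_nat_add_iff' 1).2 (hasSum_biasTerm ht μ).nat_add_neg
  simp only [Finset.sum_range_one, Int.cast_zero, Int.cast_neg, Int.cast_natCast, Nat.cast_zero,
    neg_zero, zero_sub, biasTerm_neg] at h
  rw [show bias t μ + biasTerm t μ =
    bias t μ + -biasTerm t μ - (-biasTerm t μ + -biasTerm t μ) by ring]
  refine h.congr_fun fun n => ?_
  rw [sub_eq_add_neg, ← biasTerm_neg]
  push_cast
  ring_nf

lemma bias_neg_of_one_tenth_lt {t μ : ℝ} (ht : 1 / 10 < t) (hμ₀ : 0 < μ) (hμ : μ < 1 / 2) :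
    bias t μ < 0 := by
  have hc : 0 < 2 * π * t * √(π * t) := by
    have := sqrt_pos.2 (by positivity : 0 < π * t)
    positivity
  have h := (hasSum_bias_sineSeries (by linarith : 0 < t) μ).div_const (-(2 * π * t * √(π * t)))
  simp only [mul_div_cancel_left₀ _ (neg_ne_zero.2 hc.ne')] at h
  have hS := sineSeries_pos (a := π ^ 2 * t) (θ := 2 * π * μ)
    (by nlinarith [log_two_lt_d9, pi_gt_three])
    (by positivity) (by nlinarith [pi_pos]) h
  rw [div_neg, neg_pos] at hS
  simpa using (div_lt_iff₀ hc).1 hS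

lemma bias_neg_of_sqrt_le {t μ : ℝ} (ht : 0 < t) (hμ : √(t / 2) ≤ μ) (hμ' : μ < 1 / 2) :
    bias t μ < 0 := by
  have hterm (n : ℕ) : biasTerm t (n + 1 - μ) - biasTerm t (n + μ) < 0 := by
    have hn := n.cast_nonneg (α := ℝ)
    exact sub_neg.2 (biasTerm_strictAntiOn ht (Set.mem_Ici.2 (by linarith))
      (Set.mem_Ici.2 (by linarith)) (by linarith))
  exact hasSum_lt (fun n => (hterm n).le) (hterm 0)
    (hasSum_biasTerm_succ_sub_biasTerm ht μ) hasSum_zero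

lemma bias_neg_of_lt_sqrt {t μ : ℝ} (ht : 0 < t) (ht' : t ≤ 1 / 10) (hμ₀ : 0 < μ)
    (hμ : μ < √(t / 2)) : bias t μ < 0 := by
  have hμt : μ ^ 2 < t / 2 := (lt_sqrt hμ₀.le).1 hμ
  have hμ' : μ < 28 / 125 := by nlinarith
  set r := exp (-5) with hr_def
  have hr : r < 1 := exp_lt_one_iff.2 (by norm_num)
  have hterm (n : ℕ) : biasTerm t (n + 1 - μ) - biasTerm t (n + 1 + μ) ≤
      8 * μ * exp (-3) * r ^ n := by
    have hn := n.cast_nonneg (α := ℝ)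
    have ha : 3 / 5 + n ≤ ((n : ℝ) + 1 - μ) ^ 2 := by nlinarith
    have hexp : exp (-((n : ℝ) + 1 - μ) ^ 2 / (2 * t)) ≤ exp (-3) * r ^ n := by
      rw [← exp_nat_mul, ← exp_add, exp_le_exp, div_le_iff₀ (by positivity)]
      nlinarith
    have := abs_biasTerm_sub_le ht (a := n + 1 - μ) (b := n + 1 + μ) (by linarith)
      (by nlinarith) (by linarith)
    rw [abs_sub_comm] at this
    nlinarith [le_abs_self (biasTerm t (n + 1 - μ) - biasTerm t (n + 1 + μ))]
  have hsum := hasSum_le hterm (hasSum_biasTerm_sub_biasTerm_add ht μ)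
    ((hasSum_geometric_of_lt_one (exp_pos _).le hr).mul_left (8 * μ * exp (-3)))
  rw [← hr_def] at hsum
  have hhalf : μ / 2 ≤ biasTerm t μ := by
    have := add_one_le_exp (-μ ^ 2 / t)
    have : -μ ^ 2 / t ≥ -1 / 2 := by rw [ge_iff_le, le_div_iff₀ ht]; linarith
    unfold biasTerm; nlinarith
  have he3 : exp (-3) < 1 / 20 := by
    rw [exp_neg, inv_lt_comm₀ (exp_pos _) (by norm_num)]; norm_num [twenty_lt_exp_three]
  have he5 : r < 1 / 20 := he3.trans_le' (exp_le_exp.2 (by norm_num))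
  have : 8 * μ * exp (-3) * (1 - r)⁻¹ ≤ 8 * μ * (1 / 20) * (20 / 19) := by
    gcongr
    rw [inv_le_comm₀ (by linarith) (by norm_num)]; linarith
  linarith

lemma bias_neg_of_pos_of_lt_half {t μ : ℝ} (ht : 0 < t) (hμ₀ : 0 < μ) (hμ : μ < 1 / 2) :
    bias t μ < 0 := by
  rcases le_or_gt t (1 / 10) with ht' | ht'
  · rcases le_or_gt √(t / 2) μ with hσ | hσ
    · exact bias_neg_of_sqrt_le ht hσ hμ
    · exact bias_neg_of_lt_sqrt ht ht' hμ₀ hσ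
  · exact bias_neg_of_one_tenth_lt ht' hμ₀ hμ

lemma bias_add_intCast (t μ : ℝ) (k : ℤ) : bias t (μ + k) = bias t μ := by
  conv_rhs => rw [bias, ← (Equiv.subRight k).tsum_eq]
  simp only [bias, Equiv.subRight_apply, Int.cast_sub, sub_sub, add_comm (k : ℝ) μ]

lemma bias_neg (t μ : ℝ) : bias t (-μ) = -bias t μ := by
  rw [bias, bias, ← tsum_neg, ← (Equiv.neg ℤ).tsum_eq]
  congr 1 with n
  rw [Equiv.neg_apply, Int.cast_neg, ← biasTerm_neg]
  ring_nf

theorem bias_eq_zero_iff {t μ : ℝ} (ht : 0 < t) : bias t μ = 0 ↔ ∃ k : ℤ, 2 * μ = k := by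
  refine ⟨fun h => ?_, fun ⟨k, hk⟩ => ?_⟩
  · by_contra hμ
    set ν := μ - round μ
    have hbν : bias t ν = 0 := by rw [← h, ← bias_add_intCast t ν (round μ), sub_add_cancel]
    have hν : |ν| < 1 / 2 := (abs_sub_round μ).lt_of_ne fun hν => hμ <| by
      rcases abs_eq (by norm_num : (0 : ℝ) ≤ 1 / 2) |>.1 hν with hν | hν
      · exact ⟨2 * round μ + 1, by push_cast; linarith⟩
      · exact ⟨2 * round μ - 1, by push_cast; linarith⟩
    rcases lt_trichotomy ν 0 with hν₀ | hν₀ | hν₀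
    · have := bias_neg_of_pos_of_lt_half ht (neg_pos.2 hν₀) (by linarith [neg_abs_le ν])
      rw [bias_neg, hbν] at this
      linarith
    · exact hμ ⟨2 * round μ, by push_cast; linarith⟩
    · exact (bias_neg_of_pos_of_lt_half ht hν₀ (by linarith [le_abs_self ν])).ne hbν
  · have h := bias_add_intCast t (-μ) k
    rw [show -μ + k = μ by linarith, bias_neg] at h
    linarith

lemma tsum_gaussian_pos {t : ℝ} (ht : 0 < t) (μ : ℝ) :
    0 < ∑' n : ℤ, exp (-(n - μ) ^ 2 / t) :=
  (summable_gaussian ht μ).tsum_pos (fun _ => (exp_pos _).le) 0 (exp_pos _)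

lemma tsum_mul_gaussian_div {t : ℝ} (ht : 0 < t) (μ : ℝ) :
    ∑' x : ℤ, (x : ℝ) * (exp (-((x : ℝ) - μ) ^ 2 / t) / ∑' y : ℤ, exp (-((y : ℝ) - μ) ^ 2 / t)) =
      μ + bias t μ / ∑' y : ℤ, exp (-((y : ℝ) - μ) ^ 2 / t) := by
  set Z := ∑' y : ℤ, exp (-((y : ℝ) - μ) ^ 2 / t)
  have hZ : 0 < Z := tsum_gaussian_pos ht μ
  calc ∑' x : ℤ, (x : ℝ) * (exp (-((x : ℝ) - μ) ^ 2 / t) / Z)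
      = ∑' x : ℤ, (biasTerm t (x - μ) / Z + μ / Z * exp (-((x : ℝ) - μ) ^ 2 / t)) := by
        congr 1 with x
        rw [biasTerm]
        ring
    _ = bias t μ / Z + μ / Z * Z := by
        rw [(summable_biasTerm ht μ).div_const Z |>.tsum_add ((summable_gaussian ht μ).mul_left _),
          tsum_div_const, tsum_mul_left, bias]
    _ = μ + bias t μ / Z := by field_simp; ring

end DiscreteGaussian

theorem discrete_gaussian_unbiased_iff (σ μ : ℝ) (hσ : 0 < σ) :
    (∑' x : ℤ, (x : ℝ) *
        (Real.exp (-((x : ℝ) - μ)^2 / (2 * σ^2)) /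
          ∑' y : ℤ, Real.exp (-((y : ℝ) - μ)^2 / (2 * σ^2)))) = μ ↔
      ∃ k : ℤ, 2 * μ = (k : ℝ) := by
  have ht : 0 < 2 * σ ^ 2 := by positivity
  rw [DiscreteGaussian.tsum_mul_gaussian_div ht, add_eq_left, div_eq_zero_iff,
    or_iff_left (DiscreteGaussian.tsum_gaussian_pos ht μ).ne', DiscreteGaussian.bias_eq_zero_iff ht]
end

section
/- A discrete Gaussian random variable X ~ N_ℤ(0, σ²) satisfies E[exp(tX)] ≤ exp(σ²t²/2) for all real t, i.e., it is sub-Gaussian with variance proxy σ². -/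
/-!
Completing the square, `e^{tx} e^{-x²/2σ²} = e^{σ²t²/2} e^{-(x-σ²t)²/2σ²}`, so the moment generating
function is `e^{σ²t²/2}` times the ratio of the integer Gaussian sum shifted by `σ²t` to the centred
one. That ratio is at most `1` because, by Poisson summation, the integer Gaussian has positive
Fourier coefficients, and a shift only multiplies them by phases.
-/

open Real Complex

theorem summable_exp_neg_mul_int_sq {c : ℝ} (hc : 0 < c) :
    Summable fun n : ℤ ↦ rexp (-c * n ^ 2) := by
  refine (summable_pow_mul_jacobiTheta₂_term_bound 0 (div_pos hc pi_pos) 0).congr fun n ↦ ?_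
  simp only [pow_zero, one_mul, mul_zero, zero_mul, sub_zero]
  congr 1
  field_simp

/-- Poisson summation writes the shifted sum as `√(π/c) ∑ exp(-π²n²/c) e^{2πixn}`; bounding the
phases by `1` leaves the Poisson-transformed form of the centred sum. -/
theorem tsum_exp_neg_mul_int_sub_sq_le {c : ℝ} (hc : 0 < c) (x : ℝ) :
    ∑' n : ℤ, rexp (-c * (n - x) ^ 2) ≤ ∑' n : ℤ, rexp (-c * n ^ 2) := by
  set a : ℝ := π / c
  have ha : 0 < a := div_pos pi_pos hc
  have hca : -π / a = -c := by
    simp only [a]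
    field_simp
  have hshift : ((∑' n : ℤ, rexp (-c * (n - x) ^ 2) : ℝ) : ℂ) =
      (a ^ (1 / 2 : ℝ) : ℝ) * ∑' n : ℤ, cexp (-π * a * n ^ 2 + 2 * π * (I * x) * n) := by
    have hpoisson := Complex.tsum_exp_neg_quadratic (a := a) (by simpa using ha) (I * x)
    have hroot : (a : ℂ) ^ (1 / 2 : ℂ) ≠ 0 := by simp [ha.ne']
    push_cast [hpoisson, ofReal_cpow ha.le]
    rw [← mul_assoc, mul_one_div_cancel hroot, one_mul]
    refine tsum_congr fun n ↦ ?_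
    have hca' : -(π : ℂ) / a = -c := by exact_mod_cast hca
    rw [hca', ← mul_assoc, I_mul_I]
    ring_nf
  have hnorm (n : ℤ) : ‖cexp (-π * a * n ^ 2 + 2 * π * (I * x) * n)‖ = rexp (-π * a * n ^ 2) := by
    rw [norm_exp]
    congr 1
    simp [sq]
  have hcentre :
      a ^ (1 / 2 : ℝ) * ∑' n : ℤ, rexp (-π * a * n ^ 2) = ∑' n : ℤ, rexp (-c * n ^ 2) := by
    rw [Real.tsum_exp_neg_mul_int_sq ha, hca, ← mul_assoc, mul_one_div_cancel (by positivity),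
      one_mul]
  have hsummable : Summable fun n : ℤ ↦ ‖cexp (-π * a * n ^ 2 + 2 * π * (I * x) * n)‖ := by
    refine (summable_exp_neg_mul_int_sq (mul_pos pi_pos ha)).congr fun n ↦ ?_
    rw [hnorm, neg_mul, neg_mul, neg_mul, mul_assoc]
  calc ∑' n : ℤ, rexp (-c * (n - x) ^ 2)
      = ‖((a ^ (1 / 2 : ℝ) : ℝ) : ℂ) * ∑' n : ℤ, cexp (-π * a * n ^ 2 + 2 * π * (I * x) * n)‖ := by
        rw [← hshift, Complex.norm_real,
          Real.norm_of_nonneg (tsum_nonneg fun _ ↦ (Real.exp_pos _).le)]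
    _ ≤ a ^ (1 / 2 : ℝ) * ∑' n : ℤ, rexp (-π * a * n ^ 2) := by
        rw [norm_mul, Complex.norm_real, Real.norm_of_nonneg (by positivity), ← tsum_congr hnorm]
        gcongr
        exact norm_tsum_le_tsum_norm hsummable
    _ = ∑' n : ℤ, rexp (-c * n ^ 2) := hcentre

theorem discrete_gaussian_subGaussian (σ : ℝ) (hσ : 0 < σ) (t : ℝ) :
    (∑' x : ℤ, Real.exp (t * (x : ℝ)) *
        (Real.exp (-(x : ℝ)^2 / (2 * σ^2)) /
          ∑' y : ℤ, Real.exp (-(y : ℝ)^2 / (2 * σ^2)))) ≤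
      Real.exp (σ^2 * t^2 / 2) := by
  set Z := ∑' y : ℤ, Real.exp (-(y : ℝ)^2 / (2 * σ^2))
  have hsq (x : ℝ) : -x ^ 2 / (2 * σ ^ 2) = -(2 * σ ^ 2)⁻¹ * x ^ 2 := by ring
  have hsquare (x : ℝ) : rexp (t * x) * rexp (-x ^ 2 / (2 * σ ^ 2)) =
      rexp (σ ^ 2 * t ^ 2 / 2) * rexp (-(2 * σ ^ 2)⁻¹ * (x - σ ^ 2 * t) ^ 2) := by
    rw [← Real.exp_add, ← Real.exp_add]
    congr 1
    field_simp
    ring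
  calc ∑' x : ℤ, rexp (t * x) * (rexp (-(x : ℝ) ^ 2 / (2 * σ ^ 2)) / Z)
      = rexp (σ ^ 2 * t ^ 2 / 2) * (∑' x : ℤ, rexp (-(2 * σ ^ 2)⁻¹ * (x - σ ^ 2 * t) ^ 2)) / Z := by
        simp_rw [← mul_div_assoc, hsquare, tsum_div_const, tsum_mul_left]
    _ ≤ rexp (σ ^ 2 * t ^ 2 / 2) * Z / Z := by
        gcongr
        simp_rw [Z, hsq]
        exact tsum_exp_neg_mul_int_sub_sq_le (by positivity) _
    _ ≤ rexp (σ ^ 2 * t ^ 2 / 2) := by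
        rw [mul_div_assoc]
        exact mul_le_of_le_one_right (exp_pos _).le (div_self_le_one Z)
end

section
/- The variance of the discrete Gaussian N_ℤ(0, σ²) is strictly less than σ² for every σ > 0. -/
/-!
Write `θ(a) = ∑ₙ exp(-π a n²)` and `M(a) = ∑ₙ n² exp(-π a n²)`, so that `θ' = -π M` and the
variance of `N_ℤ(0, σ²)` is `M(a) / θ(a)` at `a = 1 / (2πσ²)`. Poisson summation gives
`√a θ(a) = θ(1/a)`; differentiating,
`θ(a) / (2√a) - π √a M(a) = π M(1/a) / a² > 0`, which is `M(a) / θ(a) < 1 / (2πa) = σ²`.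
-/

open Real Set

noncomputable def gaussTheta (a : ℝ) : ℝ := ∑' n : ℤ, exp (-π * a * n ^ 2)

noncomputable def gaussThetaMoment (a : ℝ) : ℝ := ∑' n : ℤ, (n : ℝ) ^ 2 * exp (-π * a * n ^ 2)

section

variable {a : ℝ}

lemma summable_abs_pow_mul_exp_neg_pi_mul_sq (k : ℕ) (ha : 0 < a) :
    Summable fun n : ℤ => |(n : ℝ)| ^ k * exp (-π * a * n ^ 2) := by
  simpa [mul_assoc] using summable_pow_mul_jacobiTheta₂_term_bound 0 ha k

lemma summable_exp_neg_pi_mul_sq (ha : 0 < a) :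
    Summable fun n : ℤ => exp (-π * a * n ^ 2) := by
  simpa using summable_abs_pow_mul_exp_neg_pi_mul_sq 0 ha

lemma summable_sq_mul_exp_neg_pi_mul_sq (ha : 0 < a) :
    Summable fun n : ℤ => (n : ℝ) ^ 2 * exp (-π * a * n ^ 2) := by
  simpa using summable_abs_pow_mul_exp_neg_pi_mul_sq 2 ha

lemma gaussTheta_pos (ha : 0 < a) : 0 < gaussTheta a :=
  (summable_exp_neg_pi_mul_sq ha).tsum_pos (fun _ => (exp_pos _).le) 0 (exp_pos _)

lemma gaussThetaMoment_pos (ha : 0 < a) : 0 < gaussThetaMoment a :=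
  (summable_sq_mul_exp_neg_pi_mul_sq ha).tsum_pos (fun _ => by positivity) 1 (by simp [exp_pos])

lemma hasDerivAt_gaussTheta (ha : 0 < a) :
    HasDerivAt gaussTheta (-π * gaussThetaMoment a) a := by
  have hderiv (n : ℤ) (y : ℝ) :
      HasDerivAt (fun z => exp (-π * z * n ^ 2)) (exp (-π * y * n ^ 2) * (-π * n ^ 2)) y := by
    simpa using ((hasDerivAt_id y).const_mul (-π) |>.mul_const ((n : ℝ) ^ 2)).exp
  -- on `Ioi (a / 2)` the derivatives are dominated by `π n² exp(-π (a/2) n²)`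
  have hbound (n : ℤ) (y : ℝ) (hy : y ∈ Ioi (a / 2)) :
      ‖exp (-π * y * n ^ 2) * (-π * n ^ 2)‖ ≤ π * ((n : ℝ) ^ 2 * exp (-π * (a / 2) * n ^ 2)) := by
    have hπn : 0 ≤ π * (n : ℝ) ^ 2 := by positivity
    have hexp : exp (-π * y * n ^ 2) ≤ exp (-π * (a / 2) * n ^ 2) :=
      exp_le_exp.mpr <| by nlinarith [mem_Ioi.mp hy]
    rw [norm_mul, norm_mul, norm_neg, norm_of_nonneg (exp_pos _).le, norm_of_nonneg pi_pos.le,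
      norm_of_nonneg (sq_nonneg _)]
    nlinarith [mul_le_mul_of_nonneg_left hexp hπn]
  refine (hasDerivAt_tsum_of_isPreconnected
    ((summable_sq_mul_exp_neg_pi_mul_sq (half_pos ha)).mul_left π) isOpen_Ioi isPreconnected_Ioi
    (fun n y _ => hderiv n y) hbound (half_lt_self ha) (summable_exp_neg_pi_mul_sq ha)
    (half_lt_self ha)).congr_deriv ?_
  rw [gaussThetaMoment, ← tsum_mul_left]
  exact tsum_congr fun n => by ring

lemma sqrt_mul_gaussTheta (ha : 0 < a) : √a * gaussTheta a = gaussTheta a⁻¹ := by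
  rw [gaussTheta, gaussTheta, tsum_exp_neg_mul_int_sq ha, ← sqrt_eq_rpow, ← mul_assoc,
    mul_one_div_cancel (sqrt_pos.mpr ha).ne', one_mul]
  simp only [div_eq_mul_inv]

lemma gaussThetaMoment_lt (ha : 0 < a) : gaussThetaMoment a < gaussTheta a / (2 * π * a) := by
  have hsqrt : HasDerivAt (√·) (1 / (2 * √a)) a := by
    simpa using (hasDerivAt_id a).sqrt ha.ne'
  have hinv := (hasDerivAt_gaussTheta (inv_pos.mpr ha)).comp a (hasDerivAt_inv ha.ne')
  have hderiv : 1 / (2 * √a) * gaussTheta a + √a * (-π * gaussThetaMoment a) =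
      -π * gaussThetaMoment a⁻¹ * -(a ^ 2)⁻¹ :=
    (hsqrt.mul (hasDerivAt_gaussTheta ha)).unique <| hinv.congr_of_eventuallyEq
      (Filter.eventually_of_mem (Ioi_mem_nhds ha) fun x hx => sqrt_mul_gaussTheta hx)
  have hgap : gaussTheta a - 2 * π * a * gaussThetaMoment a =
      2 * √a * (π * gaussThetaMoment a⁻¹ / a ^ 2) := by
    field_simp at hderiv ⊢
    rw [sq_sqrt ha.le] at hderiv
    linear_combination hderiv
  have := gaussThetaMoment_pos (inv_pos.mpr ha)
  rw [lt_div_iff₀ (by positivity)]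
  linarith [show 0 < 2 * √a * (π * gaussThetaMoment a⁻¹ / a ^ 2) by positivity]

theorem discrete_gaussian_variance_lt (σ : ℝ) (hσ : 0 < σ) :
    (∑' x : ℤ, (x : ℝ)^2 *
        (Real.exp (-(x : ℝ)^2 / (2 * σ^2)) /
          ∑' y : ℤ, Real.exp (-(y : ℝ)^2 / (2 * σ^2)))) < σ^2 := by
  set a := (2 * π * σ ^ 2)⁻¹ with ha_def
  have ha : 0 < a := by positivity
  have hσa : σ ^ 2 = (2 * π * a)⁻¹ := by
    rw [ha_def]; field_simp
  have hexp (x : ℤ) : -(x : ℝ) ^ 2 / (2 * σ ^ 2) = -π * a * x ^ 2 := by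
    rw [hσa]; field_simp
  have hvar : (∑' x : ℤ, (x : ℝ)^2 * (exp (-(x : ℝ)^2 / (2 * σ^2)) /
      ∑' y : ℤ, exp (-(y : ℝ)^2 / (2 * σ^2)))) = gaussThetaMoment a / gaussTheta a := by
    simp only [hexp, gaussThetaMoment, gaussTheta, ← tsum_div_const, mul_div_assoc]
  rw [hvar, div_lt_iff₀ (gaussTheta_pos ha), hσa, inv_mul_eq_div]
  exact gaussThetaMoment_lt ha
end
end

section
/- Let X ~ N_ℤ(0, σ²) be a discrete Gaussian, μ a positive integer, and ε > 0. Then the mechanism satisfies (ε, δ(ε))-distinguishability in the sense that for all measurable sets S ⊂ ℤ, P(X + μ ∈ S) ≤ e^ε P(X ∈ S) + δ(ε), where δ(ε) = P(X > εσ²/μ - μ/2) - e^ε P(X > εσ²/μ + μ/2). -/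
lemma gauss_summable (σ : ℝ) (hσ : 0 < σ) :
    Summable (fun x : ℤ => Real.exp (-(x : ℝ)^2 / (2 * σ^2))) := by
  have h2 : 0 < 2 * σ^2 := by positivity
  have key : ∀ f : ℕ → ℝ, (∀ n, f n = Real.exp (-((n:ℝ))^2 / (2*σ^2))) → Summable f := by
    intro f hf
    refine Summable.of_nonneg_of_le (fun n => by rw [hf]; positivity) (fun n => ?_)
      (summable_geometric_of_lt_one (r := Real.exp (-(1/(2*σ^2)))) (by positivity)
        (by apply Real.exp_lt_one_iff.2; simp; positivity))
    rw [hf, ← Real.exp_nat_mul]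
    apply Real.exp_le_exp.2
    have hn : (n : ℝ) ≤ (n:ℝ)^2 := by
      exact_mod_cast Nat.le_self_pow two_ne_zero n
    rw [neg_div, mul_comm, mul_neg, mul_one_div, neg_le_neg_iff]
    gcongr
  apply Summable.of_nat_of_neg
  · exact key _ fun n => by norm_num
  · exact key _ fun n => by push_cast; ring_nf

theorem discrete_gaussian_dp_profile (σ : ℝ) (hσ : 0 < σ) (μ : ℤ) (hμ : 0 < μ)
    (ε : ℝ) (hε : 0 < ε)
    (p : ℤ → ℝ)
    (hp : ∀ x : ℤ, p x = Real.exp (-(x : ℝ)^2 / (2 * σ^2)) /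
      ∑' y : ℤ, Real.exp (-(y : ℝ)^2 / (2 * σ^2)))
    (S : Set ℤ) :
    (∑' x : ℤ, S.indicator (fun y => p (y - μ)) x) ≤
      Real.exp ε * (∑' x : ℤ, S.indicator p x) +
        ((∑' x : ℤ, {z : ℤ | (z : ℝ) > ε * σ^2 / (μ : ℝ) - (μ : ℝ) / 2}.indicator p x) -
          Real.exp ε *
            (∑' x : ℤ, {z : ℤ | (z : ℝ) > ε * σ^2 / (μ : ℝ) + (μ : ℝ) / 2}.indicator p x)) := by
  set c : ℝ := ε * σ^2 / (μ : ℝ) with hc_def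
  set A : Set ℤ := {z : ℤ | (z : ℝ) > ε * σ^2 / (μ : ℝ) + (μ : ℝ) / 2} with hA_def
  set B : Set ℤ := {z : ℤ | (z : ℝ) > ε * σ^2 / (μ : ℝ) - (μ : ℝ) / 2} with hB_def
  have hμR : (0:ℝ) < (μ:ℝ) := by exact_mod_cast hμ
  have h2 : (0:ℝ) < 2 * σ^2 := by positivity
  have hsum := gauss_summable σ hσ
  have hZ : 0 < ∑' y : ℤ, Real.exp (-(y : ℝ)^2 / (2 * σ^2)) :=
    Summable.tsum_pos hsum (fun y => (Real.exp_pos _).le) 0 (Real.exp_pos _)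
  have hp_nonneg : ∀ x, 0 ≤ p x := fun x => by rw [hp]; positivity
  have hps : Summable p := by
    have : p = fun x : ℤ => Real.exp (-(x : ℝ)^2 / (2 * σ^2)) / ∑' y : ℤ, Real.exp (-(y : ℝ)^2 / (2 * σ^2)) := funext hp
    rw [this]; exact hsum.div_const _
  have hps' : Summable (fun x : ℤ => p (x - μ)) :=
    ((Equiv.subRight μ).summable_iff (f := p)).2 hps
  have hcμ : c * (μ:ℝ) = ε * σ^2 := div_mul_cancel₀ _ (ne_of_gt hμR)
  -- the key exponent comparison
  have hexp : ∀ x : ℤ, ∀ t : ℝ, 2 * (x:ℝ) * μ - (μ:ℝ)^2 ≤ t * (2*σ^2) →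
      Real.exp (-((x:ℝ) - μ)^2 / (2*σ^2)) ≤ Real.exp t * Real.exp (-(x:ℝ)^2 / (2*σ^2)) := by
    intro x t ht
    rw [← Real.exp_add, Real.exp_le_exp]
    have heq : t + -(x:ℝ)^2/(2*σ^2) - (-((x:ℝ)-μ)^2/(2*σ^2))
        = (t*(2*σ^2) - (2*(x:ℝ)*μ - (μ:ℝ)^2))/(2*σ^2) := by
      field_simp; ring
    have := div_nonneg (sub_nonneg.2 ht) h2.le
    linarith [heq ▸ this]
  have hexp' : ∀ x : ℤ, ∀ t : ℝ, t * (2*σ^2) ≤ 2 * (x:ℝ) * μ - (μ:ℝ)^2 →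
      Real.exp t * Real.exp (-(x:ℝ)^2 / (2*σ^2)) ≤ Real.exp (-((x:ℝ) - μ)^2 / (2*σ^2)) := by
    intro x t ht
    rw [← Real.exp_add, Real.exp_le_exp]
    have heq : -((x:ℝ)-μ)^2/(2*σ^2) - (t + -(x:ℝ)^2/(2*σ^2))
        = ((2*(x:ℝ)*μ - (μ:ℝ)^2) - t*(2*σ^2))/(2*σ^2) := by
      field_simp; ring
    have := div_nonneg (sub_nonneg.2 ht) h2.le
    linarith [heq ▸ this]
  have hcast : ∀ x : ℤ, ((x - μ : ℤ) : ℝ) = (x:ℝ) - μ := fun x => by push_cast; ring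
  have hle : ∀ x : ℤ, (x:ℝ) ≤ c + (μ:ℝ)/2 → p (x - μ) ≤ Real.exp ε * p x := by
    intro x hx
    rw [hp, hp, hcast, ← mul_div_assoc]
    gcongr
    apply hexp
    nlinarith [mul_le_mul_of_nonneg_right hx hμR.le]
  have hge : ∀ x : ℤ, x ∈ A → Real.exp ε * p x ≤ p (x - μ) := by
    intro x hx
    have hx' : c + (μ:ℝ)/2 < (x:ℝ) := hx
    rw [hp, hp, hcast, ← mul_div_assoc]
    gcongr
    apply hexp'
    nlinarith [mul_le_mul_of_nonneg_right hx'.le hμR.le]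
  -- auxiliary function
  set g : ℤ → ℝ := fun y => p (y - μ) - Real.exp ε * p y with hg_def
  have hgsum : Summable (A.indicator g) := by
    apply Summable.indicator
    exact hps'.sub (hps.mul_left _)
  have hS1 : Summable (S.indicator (fun y => p (y - μ))) := hps'.indicator S
  have hS2 : Summable (S.indicator p) := hps.indicator S
  have hA1 : Summable (A.indicator (fun y => p (y - μ))) := hps'.indicator A
  have hA2 : Summable (A.indicator p) := hps.indicator A
  have hB1 : Summable (B.indicator p) := hps.indicator B
  -- pointwise bound
  have hpt : ∀ x : ℤ, S.indicator (fun y => p (y - μ)) x ≤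
      Real.exp ε * S.indicator p x + A.indicator g x := by
    intro x
    by_cases hxA : x ∈ A
    · by_cases hxS : x ∈ S
      · simp only [Set.indicator_of_mem hxA, Set.indicator_of_mem hxS, hg_def]
        ring_nf; rfl
      · simp only [Set.indicator_of_mem hxA, Set.indicator_of_notMem hxS, hg_def]
        have := hge x hxA
        have := hp_nonneg x
        simp only [mul_zero, zero_add]
        linarith
    · by_cases hxS : x ∈ S
      · simp only [Set.indicator_of_notMem hxA, Set.indicator_of_mem hxS]
        have hx : (x:ℝ) ≤ c + (μ:ℝ)/2 := by
          by_contra h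
          exact hxA (lt_of_not_ge h)
        linarith [hle x hx]
      · simp only [Set.indicator_of_notMem hxA, Set.indicator_of_notMem hxS]
        positivity
  have hmain : (∑' x : ℤ, S.indicator (fun y => p (y - μ)) x) ≤
      Real.exp ε * (∑' x : ℤ, S.indicator p x) + ∑' x : ℤ, A.indicator g x := by
    have := Summable.tsum_le_tsum hpt hS1 (((hS2.mul_left (Real.exp ε))).add hgsum)
    rwa [Summable.tsum_add (hS2.mul_left _) hgsum, tsum_mul_left] at this
  -- identify the A-sum
  have hAsplit : (∑' x : ℤ, A.indicator g x) =
      (∑' x : ℤ, A.indicator (fun y => p (y - μ)) x)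
        - Real.exp ε * (∑' x : ℤ, A.indicator p x) := by
    have : A.indicator g = fun x => A.indicator (fun y => p (y - μ)) x
        - Real.exp ε * A.indicator p x := by
      funext x
      by_cases hxA : x ∈ A <;>
        simp [Set.indicator_of_mem, Set.indicator_of_notMem, hxA, hg_def]
    rw [this, Summable.tsum_sub hA1 (hA2.mul_left _), tsum_mul_left]
  have hbij : (∑' x : ℤ, A.indicator (fun y => p (y - μ)) x) = ∑' x : ℤ, B.indicator p x := by
    have hfun : ∀ x : ℤ, A.indicator (fun y => p (y - μ)) x = B.indicator p (x - μ) := by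
      intro x
      have hmem : x ∈ A ↔ (x - μ) ∈ B := by
        simp only [hA_def, hB_def, Set.mem_setOf_eq, hcast]
        constructor <;> intro h <;> linarith
      by_cases hxA : x ∈ A
      · rw [Set.indicator_of_mem hxA, Set.indicator_of_mem (hmem.1 hxA)]
      · rw [Set.indicator_of_notMem hxA,
          Set.indicator_of_notMem (fun h => hxA (hmem.2 h))]
    calc (∑' x : ℤ, A.indicator (fun y => p (y - μ)) x)
        = ∑' x : ℤ, B.indicator p ((Equiv.subRight μ) x) := by
          simp only [Equiv.subRight_apply]; exact tsum_congr hfun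
      _ = ∑' x : ℤ, B.indicator p x := (Equiv.subRight μ).tsum_eq (B.indicator p)
  rw [hAsplit, hbij] at hmain
  -- now need: the A-indicator tsum equals the statement's set tsum (they are the same set A)
  linarith [hmain]
end

section
/- Let X₁, X₂ be i.i.d. random variables on ℤ with pmf proportional to exp(-x²/(2σ²)). Then for every even integer y = 2m, P(X₁+X₂ = y) = c_even · exp(-y²/(4σ²)), and for every odd integer y = 2m+1, P(X₁+X₂ = y) = c_odd · exp(-y²/(4σ²)), where c_even and c_odd are constants independent of m. -/
open MeasureTheory ProbabilityTheory

theorem sum_two_discrete_gaussians_pmf {Ω : Type*} [MeasurableSpace Ω]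
    (P : Measure Ω) [IsProbabilityMeasure P]
    (σ : ℝ) (hσ : 0 < σ)
    (X₁ X₂ : Ω → ℤ) (h1 : Measurable X₁) (h2 : Measurable X₂)
    (hindep : IndepFun X₁ X₂ P)
    (hdist : ∀ Y : Ω → ℤ, (Y = X₁ ∨ Y = X₂) → ∀ k : ℤ,
      P {ω | Y ω = k} = ENNReal.ofReal (Real.exp (-(k : ℝ)^2 / (2 * σ^2)) /
        ∑' y : ℤ, Real.exp (-(y : ℝ)^2 / (2 * σ^2)))) :
    ∃ cEven cOdd : ENNReal, ∀ m : ℤ,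
      P {ω | X₁ ω + X₂ ω = 2 * m} =
        cEven * ENNReal.ofReal (Real.exp (-((2 * m : ℤ) : ℝ)^2 / (4 * σ^2))) ∧
      P {ω | X₁ ω + X₂ ω = 2 * m + 1} =
        cOdd * ENNReal.ofReal (Real.exp (-((2 * m + 1 : ℤ) : ℝ)^2 / (4 * σ^2))) := by
  set C : ℝ := ∑' y : ℤ, Real.exp (-(y : ℝ)^2 / (2 * σ^2)) with hC
  have hC0 : 0 ≤ C := tsum_nonneg fun _ => (Real.exp_pos _).le
  have hσ2 : (σ:ℝ)^2 ≠ 0 := pow_ne_zero _ hσ.ne'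
  -- the convolution formula
  have key : ∀ y : ℤ, P {ω | X₁ ω + X₂ ω = y} =
      ∑' u : ℤ, ENNReal.ofReal (Real.exp (-((y:ℝ))^2 / (4 * σ^2))) *
        ENNReal.ofReal (Real.exp (-(((2*u - y : ℤ)):ℝ)^2 / (4 * σ^2)) / C^2) := by
    intro y
    have hset : {ω | X₁ ω + X₂ ω = y} = ⋃ u : ℤ, (X₁ ⁻¹' {u} ∩ X₂ ⁻¹' {y - u}) := by
      ext ω
      simp only [Set.mem_setOf_eq, Set.mem_iUnion, Set.mem_inter_iff, Set.mem_preimage,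
        Set.mem_singleton_iff]
      constructor
      · intro h; exact ⟨X₁ ω, rfl, by omega⟩
      · rintro ⟨u, h1, h2⟩; omega
    rw [hset, measure_iUnion]
    · congr 1
      ext u
      rw [hindep.measure_inter_preimage_eq_mul _ _ (measurableSet_singleton _)
        (measurableSet_singleton _)]
      have e1 : P (X₁ ⁻¹' {u}) = ENNReal.ofReal (Real.exp (-(u : ℝ)^2 / (2 * σ^2)) / C) := by
        have := hdist X₁ (Or.inl rfl) u
        exact this
      have e2 : P (X₂ ⁻¹' {y - u}) =
          ENNReal.ofReal (Real.exp (-((y - u : ℤ) : ℝ)^2 / (2 * σ^2)) / C) := by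
        have := hdist X₂ (Or.inr rfl) (y - u)
        exact this
      rw [e1, e2, ← ENNReal.ofReal_mul (by positivity), ← ENNReal.ofReal_mul (by positivity)]
      congr 1
      have hexp : Real.exp (-(u : ℝ)^2 / (2 * σ^2)) * Real.exp (-((y - u : ℤ) : ℝ)^2 / (2 * σ^2))
          = Real.exp (-((y:ℝ))^2 / (4 * σ^2)) *
            Real.exp (-(((2*u - y : ℤ)):ℝ)^2 / (4 * σ^2)) := by
        rw [← Real.exp_add, ← Real.exp_add]
        congr 1
        push_cast
        field_simp
        ring
      calc Real.exp (-(u : ℝ)^2 / (2 * σ^2)) / C *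
            (Real.exp (-((y - u : ℤ) : ℝ)^2 / (2 * σ^2)) / C)
          = (Real.exp (-(u : ℝ)^2 / (2 * σ^2)) *
              Real.exp (-((y - u : ℤ) : ℝ)^2 / (2 * σ^2))) / C^2 := by ring
        _ = Real.exp (-((y:ℝ))^2 / (4 * σ^2)) *
              (Real.exp (-(((2*u - y : ℤ)):ℝ)^2 / (4 * σ^2)) / C^2) := by rw [hexp]; ring
    · intro i j hij
      simp only [Function.onFun, Set.disjoint_left]
      rintro ω ⟨hi, -⟩ ⟨hj, -⟩
      simp only [Set.mem_preimage, Set.mem_singleton_iff] at hi hj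
      exact hij (hi ▸ hj ▸ rfl)
    · exact fun u => (h1 (measurableSet_singleton _)).inter (h2 (measurableSet_singleton _))
  refine ⟨∑' v : ℤ, ENNReal.ofReal (Real.exp (-(((2*v : ℤ)):ℝ)^2 / (4 * σ^2)) / C^2),
    ∑' v : ℤ, ENNReal.ofReal (Real.exp (-(((2*v - 1 : ℤ)):ℝ)^2 / (4 * σ^2)) / C^2), fun m => ?_⟩
  constructor
  · rw [key (2*m), ENNReal.tsum_mul_left, mul_comm]
    congr 1
    rw [← (Equiv.addRight m).tsum_eq
      (fun u : ℤ => ENNReal.ofReal (Real.exp (-(((2*u - 2*m : ℤ)):ℝ)^2 / (4 * σ^2)) / C^2))]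
    apply tsum_congr
    intro v
    simp only [Equiv.coe_addRight]
    norm_num
    ring_nf
  · rw [key (2*m+1), ENNReal.tsum_mul_left, mul_comm]
    congr 1
    rw [← (Equiv.addRight m).tsum_eq
      (fun u : ℤ => ENNReal.ofReal (Real.exp (-(((2*u - (2*m+1) : ℤ)):ℝ)^2 / (4 * σ^2)) / C^2))]
    apply tsum_congr
    intro v
    simp only [Equiv.coe_addRight]
    norm_num
    ring_nf
end
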